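/- Converse direction: let K(t) be a family of pairwise commuting endomorphisms of V, polynomial of degree n−1 in t with leading coefficient Id. If vectors u(t) satisfy K(t)u(s) = K(s)u(t) for all s, t, then there is a vector w (namely w = Σᵢ cᵢ u(sᵢ) for suitable interpolation coefficients cᵢ at n distinct points) with K(t)w = u(t) for all t. -/

import Mathlib

/-!
Since `K(t)` is monic of degree `n - 1` in `t`, the transposed Vandermonde system at `n` distinct
points yields weights `d` with `∑ⱼ dⱼ K(sⱼ) = Id`: they extract the top coefficient of any
polynomial of degree `< n` from its values at the `sⱼ`. Then `w = ∑ⱼ dⱼ u(sⱼ)` works, because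
compatibility gives `K(t) w = ∑ⱼ dⱼ K(sⱼ) u(t) = u(t)`.
-/

open Finset

theorem exists_sum_mul_pow_eq {F : Type*} [Field F] {n : ℕ} {s : Fin n → F}
    (hs : Function.Injective s) (e : Fin n → F) :
    ∃ d : Fin n → F, ∀ k : Fin n, ∑ j, d j * s j ^ (k : ℕ) = e k := by
  have hunit : IsUnit (Matrix.vandermonde s) := by
    rw [Matrix.isUnit_iff_isUnit_det, isUnit_iff_ne_zero, Matrix.det_vandermonde_ne_zero_iff]
    exact hs
  obtain ⟨d, hd⟩ := Matrix.vecMul_surjective_iff_isUnit.2 hunit e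
  exact ⟨d, fun k => congrFun hd k⟩

theorem exists_sum_mul_pow_eq_one_and_lower_eq_zero {F : Type*} [Field F] {n : ℕ} (hn : 1 ≤ n) {s : Fin n → F}
    (hs : Function.Injective s) :
    ∃ d : Fin n → F, ∑ j, d j * s j ^ (n - 1) = 1 ∧ ∀ i < n - 1, ∑ j, d j * s j ^ i = 0 := by
  obtain ⟨d, hd⟩ := exists_sum_mul_pow_eq hs (Pi.single ⟨n - 1, by omega⟩ 1)
  refine ⟨d, by simpa using hd ⟨n - 1, by omega⟩, fun i hi => ?_⟩
  simpa [Pi.single_apply, Fin.ext_iff, hi.ne] using hd ⟨i, by omega⟩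

theorem sum_smul_pow_smul_add_sum_eq {R M ι : Type*} [CommSemiring R] [AddCommMonoid M]
    [Module R M] [Fintype ι] {d p : ι → R} {m : ℕ} (hlead : ∑ j, d j * p j ^ m = 1)
    (hlow : ∀ i < m, ∑ j, d j * p j ^ i = 0) (x : M) (a : ℕ → M) :
    ∑ j, d j • (p j ^ m • x + ∑ i ∈ range m, p j ^ i • a i) = x := by
  have hsplit : ∑ j, d j • (p j ^ m • x + ∑ i ∈ range m, p j ^ i • a i)
      = (∑ j, d j * p j ^ m) • x + ∑ i ∈ range m, (∑ j, d j * p j ^ i) • a i := by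
    simp only [smul_add, sum_add_distrib, smul_sum, smul_smul, sum_smul]
    rw [sum_comm]
  rw [hsplit, hlead, one_smul, sum_eq_zero fun i hi => by rw [hlow i (mem_range.1 hi), zero_smul],
    add_zero]

theorem potential_from_compatibility_general {F V : Type*} [Field F] [AddCommGroup V]
    [Module F V]
    (n : ℕ) (hn : 1 ≤ n) (c : ℕ → Module.End F V) (K : F → Module.End F V)
    (hKpoly : ∀ t : F, K t = t ^ (n - 1) • (1 : Module.End F V)
      + ∑ i ∈ Finset.range (n - 1), t ^ i • c i)
    (u : F → V) (hu : ∀ s t : F, K t (u s) = K s (u t))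
    (s : Fin n → F) (hs : Function.Injective s) :
    ∃ w : V, ∀ t : F, K t w = u t := by
  obtain ⟨d, hlead, hlow⟩ := exists_sum_mul_pow_eq_one_and_lower_eq_zero hn hs
  refine ⟨∑ j, d j • u (s j), fun t => ?_⟩
  calc K t (∑ j, d j • u (s j)) = ∑ j, d j • K (s j) (u t) := by
        simp only [map_sum, map_smul, hu]
    _ = ∑ j, d j • (s j ^ (n - 1) • u t + ∑ i ∈ range (n - 1), s j ^ i • c i (u t)) := by
        simp [hKpoly, LinearMap.sum_apply]
    _ = u t := sum_smul_pow_smul_add_sum_eq hlead hlow (u t) fun i => c i (u t)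

/-- Converse direction: let `K(t) = t^{n−1}·Id + Σ_{i<n−1} t^i·c_i` be a family of pairwise
commuting endomorphisms, polynomial of degree `n−1` in `t` with leading coefficient `Id`.
If vectors `u(t)` satisfy `K(t)u(s) = K(s)u(t)` for all `s, t`, then there is a vector `w`
with `K(t)w = u(t)` for all `t`. -/
theorem potential_from_compatibility {F V : Type*} [Field F] [CharZero F] [AddCommGroup V]
    [Module F V] [FiniteDimensional F V]
    (n : ℕ) (hn : 1 ≤ n) (c : ℕ → Module.End F V) (K : F → Module.End F V)
    (hKpoly : ∀ t : F, K t = t ^ (n - 1) • (1 : Module.End F V)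
      + ∑ i ∈ Finset.range (n - 1), t ^ i • c i)
    (hcomm : ∀ s t : F, K s * K t = K t * K s)
    (u : F → V) (hu : ∀ s t : F, K t (u s) = K s (u t))
    (s : Fin n → F) (hs : Function.Injective s) :
    ∃ w : V, ∀ t : F, K t w = u t :=
  potential_from_compatibility_general n hn c K hKpoly u hu s hs
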